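/- arXiv:2209.13938 — 2 statements merged into one kernel-verified Lean document; each statement's English description precedes it below -/
import Mathlib

section
/- Let G be an n-player game with strategy counts d and D = ∏_i d i. Suppose there exists q : ((j : Fin n) → Fin (d j)) → ℝ with q s > 0 for every profile s and with every incentive constraint strict, i.e. for every player i and all k ≠ l in Fin (d i), ∑_{s : s i = k} (X i s − X i (Function.update s i l)) · q s > 0. Then the correlated equilibrium cone C_G has nonempty topological interior in ℝ^D, and the correlated equilibrium polytope P_G has maximal dimension, i.e. the dimension of the direction of its affine span equals D − 1. -/
/-- The correlated equilibrium cone of an `n`-player game. -/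
def CorrelatedEqCone {n : ℕ} (d : Fin n → ℕ)
    (X : (i : Fin n) → ((j : Fin n) → Fin (d j)) → ℝ) :
    Set (((j : Fin n) → Fin (d j)) → ℝ) :=
  {p | (∀ s, 0 ≤ p s) ∧
    ∀ (i : Fin n) (k l : Fin (d i)),
      0 ≤ ∑ s ∈ Finset.univ.filter (fun s => s i = k),
        (X i s - X i (Function.update s i l)) * p s}

/-- The correlated equilibrium polytope of an `n`-player game. -/
def CorrelatedEqPolytope {n : ℕ} (d : Fin n → ℕ)
    (X : (i : Fin n) → ((j : Fin n) → Fin (d j)) → ℝ) :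
    Set (((j : Fin n) → Fin (d j)) → ℝ) :=
  {p ∈ CorrelatedEqCone d X | ∑ s, p s = 1}

/-!
A point `q` satisfying all constraints strictly lies in the interior of `C_G`: the cone is cut
out by finitely many continuous inequalities, and those with `k = l` hold trivially. Rescaling
`q` to total mass `1` gives an interior point of `C_G` on the hyperplane `∑ s, p s = 1`, so
`P_G` contains a neighbourhood of it within that hyperplane. Hence the direction of the affine
span of `P_G` is the whole kernel of the sum functional, which has dimension `D - 1`.
-/

open Filter Topology Finset Module

section SumFunctional

variable (ι K : Type*) [Fintype ι]

def sumLinearMap [Semiring K] : (ι → K) →ₗ[K] K := ∑ i, LinearMap.proj i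

variable {ι K}

@[simp]
lemma sumLinearMap_apply [Semiring K] (p : ι → K) : sumLinearMap ι K p = ∑ i, p i := by
  simp [sumLinearMap]

lemma finrank_ker_sumLinearMap [Field K] [Nonempty ι] :
    finrank K (LinearMap.ker (sumLinearMap ι K)) = Fintype.card ι - 1 := by
  classical
  obtain ⟨i⟩ := ‹Nonempty ι›
  have hne : sumLinearMap ι K ≠ 0 := fun h => by
    simpa using LinearMap.congr_fun h (Pi.single i 1)
  have := Dual.finrank_ker_add_one_of_ne_zero hne
  rw [finrank_fintype_fun_eq_card] at this
  omega

end SumFunctional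

lemma direction_affineSpan_inter_preimage_singleton {E : Type*} [AddCommGroup E] [Module ℝ E]
    [TopologicalSpace E] [IsTopologicalAddGroup E] [ContinuousSMul ℝ E]
    (f : E →ₗ[ℝ] ℝ) {C : Set E} {x : E} (hx : x ∈ interior C) :
    (affineSpan ℝ (C ∩ f ⁻¹' {f x})).direction = LinearMap.ker f := by
  refine le_antisymm ?_ fun v hv => ?_
  · rw [direction_affineSpan, vectorSpan_def, Submodule.span_le]
    rintro _ ⟨p, ⟨-, hp⟩, r, ⟨-, hr⟩, rfl⟩
    simp_all [Set.mem_preimage, Set.mem_singleton_iff]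
  · have hline : Tendsto (fun t : ℝ => x + t • v) (𝓝[≠] 0) (𝓝 x) := by
      have hcont : Continuous fun t : ℝ => x + t • v := by fun_prop
      simpa using (hcont.tendsto 0).mono_left nhdsWithin_le_nhds
    obtain ⟨t, hxt, ht⟩ :=
      ((hline.eventually (mem_interior_iff_mem_nhds.1 hx)).and self_mem_nhdsWithin).exists
    have hmem : x + t • v ∈ C ∩ f ⁻¹' {f x} := ⟨hxt, by simp [LinearMap.mem_ker.1 hv]⟩
    have := vsub_mem_vectorSpan ℝ hmem ⟨interior_subset hx, rfl⟩
    rw [vsub_eq_sub, add_sub_cancel_left] at this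
    rw [direction_affineSpan, ← inv_smul_smul₀ (Set.mem_compl_singleton_iff.1 ht) v]
    exact Submodule.smul_mem _ t⁻¹ this

section Game

variable {n : ℕ} (d : Fin n → ℕ) (X : (i : Fin n) → ((j : Fin n) → Fin (d j)) → ℝ)

def incentiveGap (i : Fin n) (k l : Fin (d i)) :
    (((j : Fin n) → Fin (d j)) → ℝ) →ₗ[ℝ] ℝ where
  toFun p := ∑ s ∈ univ.filter (fun s => s i = k), (X i s - X i (Function.update s i l)) * p s
  map_add' p r := by simp only [Pi.add_apply, mul_add, sum_add_distrib]
  map_smul' c p := by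
    simp only [Pi.smul_apply, smul_eq_mul, mul_sum, RingHom.id_apply]
    exact sum_congr rfl fun s _ => by ring

lemma incentiveGap_self (i : Fin n) (k : Fin (d i)) : incentiveGap d X i k k = 0 := by
  ext p
  refine sum_eq_zero fun s hs => ?_
  rw [(mem_filter.1 hs).2.symm, Function.update_eq_self, sub_self, zero_mul]

lemma mem_interior_correlatedEqCone {q : ((j : Fin n) → Fin (d j)) → ℝ} (hq : ∀ s, 0 < q s)
    (hstrict : ∀ i k l, k ≠ l → 0 < incentiveGap d X i k l q) :
    q ∈ interior (CorrelatedEqCone d X) := by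
  have hpos : ∀ᶠ p in 𝓝 q, ∀ s, 0 < p s := eventually_all.2 fun s =>
    continuousAt_const.eventually_lt (continuous_apply s).continuousAt (hq s)
  have hgap : ∀ᶠ p in 𝓝 q, ∀ i k l, k ≠ l → 0 < incentiveGap d X i k l p :=
    eventually_all.2 fun i => eventually_all.2 fun k => eventually_all.2 fun l => by
      by_cases hkl : k = l
      · exact .of_forall fun _ h => absurd hkl h
      · exact (continuousAt_const.eventually_lt
          (incentiveGap d X i k l).continuous_of_finiteDimensional.continuousAt
          (hstrict i k l hkl)).mono fun _ hp _ => hp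
  rw [mem_interior_iff_mem_nhds]
  filter_upwards [hpos, hgap] with p hp hg
  refine ⟨fun s => (hp s).le, fun i k l => ?_⟩
  rcases eq_or_ne k l with rfl | hkl
  · exact (congrArg (· p) (incentiveGap_self d X i k)).ge
  · exact (hg i k l hkl).le

lemma correlatedEqPolytope_eq_inter :
    CorrelatedEqPolytope d X = CorrelatedEqCone d X ∩ sumLinearMap _ ℝ ⁻¹' {1} := by
  ext p
  simp only [CorrelatedEqPolytope, Set.mem_inter_iff, Set.mem_preimage, sumLinearMap_apply,
    Set.mem_singleton_iff, Set.mem_ofPred_eq]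

end Game

/-- If there is a strictly positive point satisfying all incentive constraints strictly,
then the correlated equilibrium cone has nonempty interior and the correlated
equilibrium polytope has maximal dimension `D - 1`. -/
theorem cone_interior_nonempty_and_polytope_maximal_dim
    {n : ℕ} (d : Fin n → ℕ) (hd : ∀ i, 1 ≤ d i)
    (X : (i : Fin n) → ((j : Fin n) → Fin (d j)) → ℝ)
    (q : ((j : Fin n) → Fin (d j)) → ℝ)
    (hq : ∀ s, 0 < q s)
    (hstrict : ∀ (i : Fin n) (k l : Fin (d i)), k ≠ l →
      0 < ∑ s ∈ Finset.univ.filter (fun s => s i = k),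
        (X i s - X i (Function.update s i l)) * q s) :
    (interior (CorrelatedEqCone d X)).Nonempty ∧
      Module.finrank ℝ (affineSpan ℝ (CorrelatedEqPolytope d X)).direction
        = (∏ i, d i) - 1 := by
  have : Nonempty ((j : Fin n) → Fin (d j)) := ⟨fun j => ⟨0, hd j⟩⟩
  have hmass : 0 < ∑ s, q s := sum_pos (fun s _ => hq s) univ_nonempty
  set q₁ := (∑ s, q s)⁻¹ • q
  have hq₁ : q₁ ∈ interior (CorrelatedEqCone d X) :=
    mem_interior_correlatedEqCone d X (fun s => mul_pos (inv_pos.2 hmass) (hq s))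
      fun i k l hkl => by
        rw [map_smul, smul_eq_mul]
        exact mul_pos (inv_pos.2 hmass) (hstrict i k l hkl)
  have hq₁_mass : sumLinearMap _ ℝ q₁ = 1 := by
    simp [q₁, inv_mul_cancel₀ hmass.ne']
  refine ⟨⟨q₁, hq₁⟩, ?_⟩
  rw [correlatedEqPolytope_eq_inter, ← hq₁_mass,
    direction_affineSpan_inter_preimage_singleton _ hq₁, finrank_ker_sumLinearMap,
    Fintype.card_pi]
  simp
end

section
/- Let G be an n-player game with strategy counts d and D = ∏_i d i. Assume that for every player i and every pair k ≠ l in Fin (d i) the payoff-difference vector is not identically zero, i.e. there exists a profile s with s i = k such that X i s ≠ X i (Function.update s i l). If the correlated equilibrium cone C_G has nonempty topological interior in ℝ^D, then there exists q with q s > 0 for every profile s and with every incentive constraint strict: for every player i and all k ≠ l in Fin (d i), ∑_{s : s i = k} (X i s − X i (Function.update s i l)) · q s > 0. -/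
/-!
Every defining inequality of the cone is `0 ≤ f p` for a linear functional `f`, and a nonzero
linear functional is an open map, so on the interior of the cone each such inequality is strict.
The functionals in question are the coordinates and the incentive constraints, and the latter are
nonzero exactly because some payoff difference with `s i = k` does not vanish.
-/

open Set

theorem StrongDual.pos_of_mem_interior_of_nonneg {E : Type*} [AddCommGroup E] [TopologicalSpace E]
    [ContinuousAdd E] [Module ℝ E] [ContinuousSMul ℝ E] {f : StrongDual ℝ E} (hf : f ≠ 0)
    {S : Set E} (hS : ∀ x ∈ S, 0 ≤ f x) {p : E} (hp : p ∈ interior S) : 0 < f p := by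
  have hp' : p ∈ interior (f ⁻¹' Ici 0) := interior_mono hS hp
  have := (f.isOpenMap_of_ne_zero hf).interior_preimage_subset_preimage_interior hp'
  rwa [mem_preimage, interior_Ici] at this

theorem Finset.sum_mul_pos_of_mem_interior_of_nonneg {ι : Type*}
    {t : Finset ι} {c : ι → ℝ} {s₀ : ι} (hs₀ : s₀ ∈ t) (hc : c s₀ ≠ 0) {S : Set (ι → ℝ)}
    (hS : ∀ q ∈ S, 0 ≤ ∑ s ∈ t, c s * q s) {p : ι → ℝ} (hp : p ∈ interior S) :
    0 < ∑ s ∈ t, c s * p s := by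
  classical
  set f : StrongDual ℝ (ι → ℝ) := ∑ s ∈ t, c s • ContinuousLinearMap.proj s
  have hf_apply (q : ι → ℝ) : f q = ∑ s ∈ t, c s * q s := by
    simp [f]
  have hf : f ≠ 0 := fun h0 ↦ hc <| by
    simpa [hf_apply, Pi.single_apply, hs₀] using congr($h0 (Pi.single s₀ 1))
  simpa only [hf_apply] using
    StrongDual.pos_of_mem_interior_of_nonneg hf (fun q hq ↦ (hf_apply q).symm ▸ hS q hq) hp

theorem exists_strict_point_of_cone_interior_nonempty_general
    {n : ℕ} (d : Fin n → ℕ)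
    (X : (i : Fin n) → ((j : Fin n) → Fin (d j)) → ℝ)
    (hX : ∀ (i : Fin n) (k l : Fin (d i)), k ≠ l →
      ∃ s : (j : Fin n) → Fin (d j), s i = k ∧ X i s ≠ X i (Function.update s i l))
    (hint : (interior (CorrelatedEqCone d X)).Nonempty) :
    ∃ q : ((j : Fin n) → Fin (d j)) → ℝ,
      (∀ s, 0 < q s) ∧
      ∀ (i : Fin n) (k l : Fin (d i)), k ≠ l →
        0 < ∑ s ∈ Finset.univ.filter (fun s => s i = k),
          (X i s - X i (Function.update s i l)) * q s := by
  obtain ⟨p, hp⟩ := hint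
  refine ⟨p, fun s ↦ ?_, fun i k l hkl ↦ ?_⟩
  · simpa using Finset.sum_mul_pos_of_mem_interior_of_nonneg (c := fun _ ↦ 1)
      (Finset.mem_singleton_self s) one_ne_zero (fun q hq ↦ by simpa using hq.1 s) hp
  · obtain ⟨s₀, hs₀k, hs₀⟩ := hX i k l hkl
    exact Finset.sum_mul_pos_of_mem_interior_of_nonneg
      (c := fun s ↦ X i s - X i (Function.update s i l)) (by simpa using hs₀k)
      (sub_ne_zero.mpr hs₀) (fun q hq ↦ hq.2 i k l) hp

/-- If no payoff-difference vector is identically zero and the correlated equilibrium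
cone has nonempty interior, then there is a strictly positive point satisfying all
incentive constraints strictly. -/
theorem exists_strict_point_of_cone_interior_nonempty
    {n : ℕ} (d : Fin n → ℕ) (hd : ∀ i, 1 ≤ d i)
    (X : (i : Fin n) → ((j : Fin n) → Fin (d j)) → ℝ)
    (hX : ∀ (i : Fin n) (k l : Fin (d i)), k ≠ l →
      ∃ s : (j : Fin n) → Fin (d j), s i = k ∧ X i s ≠ X i (Function.update s i l))
    (hint : (interior (CorrelatedEqCone d X)).Nonempty) :
    ∃ q : ((j : Fin n) → Fin (d j)) → ℝ,
      (∀ s, 0 < q s) ∧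
      ∀ (i : Fin n) (k l : Fin (d i)), k ≠ l →
        0 < ∑ s ∈ Finset.univ.filter (fun s => s i = k),
          (X i s - X i (Function.update s i l)) * q s :=
  exists_strict_point_of_cone_interior_nonempty_general d X hX hint
end
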